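/- For every Łukasiewicz path L of length n there exists a Motzkin path M of length n such that the set of positions of occurrences of the up step U = (1,1) in L equals the set of positions of occurrences of U = (1,1) in M. -/

import Mathlib

/-- A Łukasiewicz path: vertical step components, each `≥ -1`, all partial sums
nonnegative, total sum `0`. -/
def IsLukas (w : List ℤ) : Prop :=
  (∀ s ∈ w, -1 ≤ s) ∧ (∀ k, 0 ≤ (w.take k).sum) ∧ w.sum = 0

/-- A Motzkin path: a Łukasiewicz path using only steps `(1,1)`, `(1,0)`, `(1,-1)`. -/
def IsMotzkin (w : List ℤ) : Prop :=
  IsLukas w ∧ ∀ s ∈ w, s ≤ 1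

/-- Greedy construction: copy up steps, otherwise descend if possible. -/
def buildM : List ℤ → ℕ → List ℤ
  | [], _ => []
  | s :: t, h =>
    if s = 1 then 1 :: buildM t (h + 1)
    else if h = 0 then 0 :: buildM t 0
    else (-1) :: buildM t (h - 1)

/-- Final height of the greedy construction. -/
def hFin : List ℤ → ℕ → ℕ
  | [], h => h
  | s :: t, h =>
    if s = 1 then hFin t (h + 1)
    else if h = 0 then hFin t 0
    else hFin t (h - 1)

lemma buildM_length : ∀ (w : List ℤ) (h : ℕ), (buildM w h).length = w.length
  | [], _ => rfl
  | s :: t, h => by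
    unfold buildM
    split_ifs <;> simp [buildM_length t]

lemma buildM_mem : ∀ (w : List ℤ) (h : ℕ) (x : ℤ), x ∈ buildM w h → -1 ≤ x ∧ x ≤ 1
  | [], _, x => by simp [buildM]
  | s :: t, h, x => by
    unfold buildM
    split_ifs <;> intro hx <;> rcases List.mem_cons.1 hx with rfl | hx <;>
      first | omega | exact buildM_mem t _ x hx

lemma buildM_sum : ∀ (w : List ℤ) (h : ℕ), (buildM w h).sum = (hFin w h : ℤ) - h
  | [], h => by simp [buildM, hFin]
  | s :: t, h => by
    unfold buildM hFin
    split_ifs with h1 h2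
    · rw [List.sum_cons, buildM_sum t (h + 1)]; push_cast; ring
    · subst h2; rw [List.sum_cons, buildM_sum t 0]; simp
    · rw [List.sum_cons, buildM_sum t (h - 1)]
      have : (1 : ℕ) ≤ h := Nat.one_le_iff_ne_zero.2 h2
      push_cast [Nat.cast_sub this]
      ring

lemma buildM_take : ∀ (w : List ℤ) (h : ℕ) (k : ℕ),
    -(h : ℤ) ≤ ((buildM w h).take k).sum
  | [], h, k => by simp [buildM]
  | s :: t, h, 0 => by simp
  | s :: t, h, k + 1 => by
    unfold buildM
    split_ifs with h1 h2
    · have := buildM_take t (h + 1) k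
      simp only [List.take_succ_cons, List.sum_cons]
      push_cast at this ⊢; omega
    · have := buildM_take t 0 k
      subst h2
      simp only [List.take_succ_cons, List.sum_cons]
      omega
    · have := buildM_take t (h - 1) k
      have h1le : (1 : ℕ) ≤ h := Nat.one_le_iff_ne_zero.2 h2
      simp only [List.take_succ_cons, List.sum_cons]
      rw [Nat.cast_sub h1le] at this
      push_cast at this ⊢; omega

lemma hFin_le : ∀ (w : List ℤ) (h : ℕ) (H : ℤ),
    (∀ s ∈ w, -1 ≤ s) → (h : ℤ) ≤ H → (∀ k, 0 ≤ H + (w.take k).sum) →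
    (hFin w h : ℤ) ≤ H + w.sum
  | [], h, H, _, hle, _ => by simpa [hFin] using hle
  | s :: t, h, H, hmem, hle, hpre => by
    have hs : -1 ≤ s := hmem s List.mem_cons_self
    have hpre' : ∀ k, 0 ≤ (H + s) + (t.take k).sum := by
      intro k
      have := hpre (k + 1)
      simpa [List.take_succ_cons, add_assoc] using this
    unfold hFin
    split_ifs with h1 h2
    · have := hFin_le t (h + 1) (H + s)
        (fun x hx => hmem x (List.mem_cons_of_mem _ hx))
        (by push_cast; omega) hpre'
      rw [List.sum_cons]; push_cast at this ⊢; omega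
    · have h0 : (0 : ℤ) ≤ H + s := by simpa using hpre' 0
      have := hFin_le t 0 (H + s)
        (fun x hx => hmem x (List.mem_cons_of_mem _ hx))
        (by push_cast; omega) hpre'
      rw [List.sum_cons]; push_cast at this ⊢; omega
    · have h1le : (1 : ℕ) ≤ h := Nat.one_le_iff_ne_zero.2 h2
      have := hFin_le t (h - 1) (H + s)
        (fun x hx => hmem x (List.mem_cons_of_mem _ hx))
        (by rw [Nat.cast_sub h1le]; push_cast; omega) hpre'
      rw [List.sum_cons]; push_cast at this ⊢; omega

lemma buildM_get : ∀ (w : List ℤ) (h : ℕ) (j : ℕ),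
    w[j]? = some 1 ↔ (buildM w h)[j]? = some 1
  | [], h, j => by simp [buildM]
  | s :: t, h, 0 => by
    unfold buildM
    split_ifs with h1 h2 <;> simp [h1]
  | s :: t, h, j + 1 => by
    unfold buildM
    split_ifs <;> simpa using buildM_get t _ j

/-- Every Łukasiewicz path is `U`-equivalent to some Motzkin path of the same
length: the up steps `U = (1,1)` occur at exactly the same positions. -/
theorem exists_motzkin_U_equiv (L : List ℤ) (hL : IsLukas L) :
    ∃ M : List ℤ, IsMotzkin M ∧ M.length = L.length ∧
      ∀ j : ℕ, L[j]? = some 1 ↔ M[j]? = some 1 := by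
  obtain ⟨hmem, hpre, hsum⟩ := hL
  refine ⟨buildM L 0, ⟨⟨fun s hs => (buildM_mem L 0 s hs).1, ?_, ?_⟩,
    fun s hs => (buildM_mem L 0 s hs).2⟩, buildM_length L 0, fun j => buildM_get L 0 j⟩
  · intro k
    have := buildM_take L 0 k
    simpa using this
  · have h1 : (hFin L 0 : ℤ) ≤ 0 := by
      have := hFin_le L 0 0 hmem (by norm_num) (by simpa using hpre)
      simpa [hsum] using this
    have h2 : (0 : ℤ) ≤ (hFin L 0 : ℤ) := Nat.cast_nonneg _
    rw [buildM_sum]; omega
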